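/- arXiv:1305.2434 — 5 statements merged into one kernel-verified Lean document; each statement's English description precedes it below -/
import Mathlib

section
/- Let a < 0 < b and f(r) = 1 + a·r for r ≤ 0, f(r) = e^{-b·r} for r > 0, with a + b = 0. Suppose (r(t), θ(t)) solves the geodesic equations r'' - f'(r) f(r) (θ')² = 0 and (f(r)² θ')' = 0 on [0, ∞), with (r'(0), θ'(0)) ≠ (0,0). Then r(t) → -∞ as t → ∞ or the geodesic is unbounded; in particular no maximally extended nonconstant geodesic stays in a bounded region of r. -/
/-! Clairaut's relation `f(r)² θ' = c` turns the radial geodesic equation into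
`r'' = c² f'(r) / f(r)³`. When `a + b = 0` the profile is `C¹` with `f' < 0` everywhere, so on a
bounded range of `r` this gives `r'' ≤ -ε c²` for some `ε > 0`. If `c ≠ 0`, `r` lies below a
downward parabola and tends to `-∞`; if `c = 0` the geodesic is radial, `r'` is a nonzero
constant and `|r|` grows linearly. -/

open Set Filter Topology

theorem hasDerivAt_ite_le {g h g' h' : ℝ → ℝ} {c : ℝ} (hg : ∀ x, HasDerivAt g (g' x) x)
    (hh : ∀ x, HasDerivAt h (h' x) x) (hc : g c = h c) (hc' : g' c = h' c) (x : ℝ) :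
    HasDerivAt (fun x => if x ≤ c then g x else h x) (if x ≤ c then g' x else h' x) x := by
  rcases lt_trichotomy x c with hx | rfl | hx
  · rw [if_pos hx.le]
    refine (hg x).congr_of_eventuallyEq ?_
    filter_upwards [Iio_mem_nhds hx] with y hy using if_pos (le_of_lt hy)
  · rw [if_pos le_rfl]
    have hleft : HasDerivWithinAt (fun y => if y ≤ x then g y else h y) (g' x) (Iic x) x :=
      (hg x).hasDerivWithinAt.congr (fun y hy => if_pos hy) (if_pos le_rfl)
    have hright : HasDerivWithinAt (fun y => if y ≤ x then g y else h y) (g' x) (Ici x) x := by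
      refine (hc' ▸ hh x).hasDerivWithinAt.congr (fun y hy => ?_) (by simp [hc])
      rcases (mem_Ici.1 hy).eq_or_lt with rfl | hy
      · simp [hc]
      · simp [not_le.2 hy]
    simpa [Iic_union_Ici] using hleft.union hright
  · rw [if_neg (not_le.2 hx)]
    refine (hh x).congr_of_eventuallyEq ?_
    filter_upwards [Ioi_mem_nhds hx] with y hy using if_neg (not_le.2 hy)

theorem eq_of_hasDerivAt_zero_of_mem_Ici {F : ℝ → ℝ} {a : ℝ}
    (hF : ∀ t ∈ Ici a, HasDerivAt F 0 t) : ∀ t ∈ Ici a, F t = F a := fun t ht =>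
  constant_of_has_deriv_right_zero (fun x hx => (hF x hx.1).continuousAt.continuousWithinAt)
    (fun x hx => (hF x hx.1).hasDerivWithinAt) t (right_mem_Icc.2 ht)

theorem antitoneOn_Ici_of_hasDerivAt_nonpos {g g' : ℝ → ℝ} {a : ℝ}
    (hg : ∀ t, HasDerivAt g (g' t) t) (hg' : ∀ t ∈ Ici a, g' t ≤ 0) : AntitoneOn g (Ici a) :=
  antitoneOn_of_hasDerivWithinAt_nonpos (convex_Ici a)
    (fun t _ => (hg t).continuousAt.continuousWithinAt) (fun t _ => (hg t).hasDerivWithinAt)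
    (fun t ht => hg' t (interior_subset ht))

section SecondDerivative

variable {r r' r'' : ℝ → ℝ}

theorem le_quadratic_of_deriv2_le (hr : ∀ t, HasDerivAt r (r' t) t)
    (hr' : ∀ t, HasDerivAt r' (r'' t) t) {C : ℝ} (hC : ∀ t ∈ Ici (0 : ℝ), r'' t ≤ C) :
    ∀ t ∈ Ici (0 : ℝ), r t ≤ r 0 + r' 0 * t + C / 2 * t ^ 2 := by
  have hr'_le : ∀ t ∈ Ici (0 : ℝ), r' t ≤ r' 0 + C * t := by
    have := antitoneOn_Ici_of_hasDerivAt_nonpos (g := fun t => r' t - C * t)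
      (fun t => (hr' t).sub ((hasDerivAt_id t).const_mul C)) (fun t ht => by simpa using hC t ht)
    intro t ht
    simpa using this self_mem_Ici ht ht
  have := antitoneOn_Ici_of_hasDerivAt_nonpos (g := fun t => r t - r' 0 * t - C / 2 * t ^ 2)
    (fun t => ((hr t).sub ((hasDerivAt_id t).const_mul _)).sub ((hasDerivAt_pow 2 t).const_mul _))
    (fun t ht => by simp only [mul_one]; linarith [hr'_le t ht])
  intro t ht
  linarith [this self_mem_Ici ht ht]

theorem tendsto_atBot_of_deriv2_le_neg (hr : ∀ t, HasDerivAt r (r' t) t)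
    (hr' : ∀ t, HasDerivAt r' (r'' t) t) {ε : ℝ} (hε : 0 < ε)
    (hr'' : ∀ t ∈ Ici (0 : ℝ), r'' t ≤ -ε) : Tendsto r atTop atBot := by
  have hquad : Tendsto (fun t => r 0 + t * (r' 0 + -ε / 2 * t)) atTop atBot :=
    tendsto_atBot_add_const_left _ _ (tendsto_id.atTop_mul_atBot₀
      (tendsto_atBot_add_const_left _ _ (tendsto_id.const_mul_atTop_of_neg (by linarith))))
  refine tendsto_atBot_mono' _ ?_ hquad
  filter_upwards [eventually_ge_atTop 0] with t ht
  linarith [le_quadratic_of_deriv2_le hr hr' hr'' t ht]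

theorem tendsto_abs_atTop_of_deriv2_eq_zero (hr : ∀ t, HasDerivAt r (r' t) t)
    (hr' : ∀ t, HasDerivAt r' (r'' t) t) (hr'' : ∀ t ∈ Ici (0 : ℝ), r'' t = 0) (hv : r' 0 ≠ 0) :
    Tendsto (fun t => |r t|) atTop atTop := by
  have hupper := le_quadratic_of_deriv2_le hr hr' (C := 0) fun t ht => (hr'' t ht).le
  have hlower := le_quadratic_of_deriv2_le (r := fun t => -r t) (r' := fun t => -r' t)
    (fun t => (hr t).neg) (fun t => (hr' t).neg) (C := 0) fun t ht => by simp [hr'' t ht]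
  have hlin : Tendsto (fun t => |r' 0| * t - |r 0|) atTop atTop :=
    tendsto_atTop_add_const_right _ _ (tendsto_id.const_mul_atTop (abs_pos.2 hv))
  refine tendsto_atTop_mono' _ ?_ hlin
  filter_upwards [eventually_ge_atTop 0] with t ht
  have hr_eq : r t = r 0 + r' 0 * t := by linarith [hupper t ht, hlower t ht]
  have h := abs_sub_abs_le_abs_sub (r' 0 * t) (-r 0)
  rw [abs_mul, abs_of_nonneg ht, abs_neg, sub_neg_eq_add, add_comm] at h
  rwa [hr_eq]

end SecondDerivative

section WarpedProduct

variable {f r r' θ' r'' : ℝ → ℝ}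

theorem geodesic_accel_eq (hf_pos : ∀ s, 0 < f s)
    (hgeo1 : ∀ t ∈ Ici (0 : ℝ), r'' t - deriv f (r t) * f (r t) * θ' t ^ 2 = 0)
    (hgeo2 : ∀ t ∈ Ici (0 : ℝ), HasDerivAt (fun s => f (r s) ^ 2 * θ' s) 0 t) :
    ∀ t ∈ Ici (0 : ℝ), r'' t = deriv f (r t) / f (r t) ^ 3 * (f (r 0) ^ 2 * θ' 0) ^ 2 := by
  intro t ht
  have hfr := (hf_pos (r t)).ne'
  calc r'' t = deriv f (r t) * f (r t) * θ' t ^ 2 := by linarith [hgeo1 t ht]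
    _ = deriv f (r t) / f (r t) ^ 3 * (f (r t) ^ 2 * θ' t) ^ 2 := by field_simp
    _ = _ := by rw [eq_of_hasDerivAt_zero_of_mem_Ici hgeo2 t ht]

theorem not_exists_forall_abs_le_of_geodesic (hf : ContDiff ℝ 1 f) (hf_pos : ∀ s, 0 < f s)
    (hf'_neg : ∀ s, deriv f s < 0)
    (hr : ∀ t, HasDerivAt r (r' t) t) (hr' : ∀ t, HasDerivAt r' (r'' t) t)
    (hgeo1 : ∀ t ∈ Ici (0 : ℝ), r'' t - deriv f (r t) * f (r t) * θ' t ^ 2 = 0)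
    (hgeo2 : ∀ t ∈ Ici (0 : ℝ), HasDerivAt (fun s => f (r s) ^ 2 * θ' s) 0 t)
    (hne : (r' 0, θ' 0) ≠ (0, 0)) :
    ¬ ∃ M : ℝ, ∀ t ∈ Ici (0 : ℝ), |r t| ≤ M := by
  rintro ⟨M, hM⟩
  have haccel := geodesic_accel_eq hf_pos hgeo1 hgeo2
  set c := f (r 0) ^ 2 * θ' 0 with hc_def
  obtain ⟨ε, hε, hε_le⟩ : ∃ ε > 0, ∀ s ∈ Icc (-M) M, deriv f s / f s ^ 3 ≤ -ε := by
    have hcont : Continuous fun s => -(deriv f s / f s ^ 3) :=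
      ((hf.continuous_deriv le_rfl).div (hf.continuous.pow 3)
        fun s => (pow_pos (hf_pos s) 3).ne').neg
    obtain ⟨ε, hε, h⟩ := isCompact_Icc.exists_forall_le' hcont.continuousOn (a := 0)
      fun s _ => neg_pos.2 (div_neg_of_neg_of_pos (hf'_neg s) (pow_pos (hf_pos s) 3))
    exact ⟨ε, hε, fun s hs => le_neg_of_le_neg (h s hs)⟩
  suffices Tendsto (fun t => |r t|) atTop atTop by
    obtain ⟨t, hMt, ht⟩ := ((this.eventually_gt_atTop M).and (eventually_ge_atTop 0)).exists
    exact (hM t ht).not_gt hMt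
  by_cases hc : c = 0
  · have hθ'0 : θ' 0 = 0 := by simpa [hc_def, (hf_pos (r 0)).ne'] using hc
    refine tendsto_abs_atTop_of_deriv2_eq_zero hr hr' (fun t ht => by simp [haccel t ht, hc]) ?_
    rintro hr'0
    exact hne (by rw [hr'0, hθ'0])
  · refine tendsto_abs_atBot_atTop.comp (tendsto_atBot_of_deriv2_le_neg hr hr'
      (mul_pos hε (pow_pos (abs_pos.2 hc) 2)) fun t ht => ?_)
    rw [haccel t ht, ← sq_abs c, ← neg_mul]
    exact mul_le_mul_of_nonneg_right (hε_le _ (abs_le.1 (hM t ht))) (sq_nonneg _)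

end WarpedProduct

noncomputable def coneCuspProfile (a s : ℝ) : ℝ := if s ≤ 0 then 1 + a * s else Real.exp (a * s)

section ConeCusp

variable {a : ℝ}

theorem coneCuspProfile_pos (ha : a ≤ 0) (s : ℝ) : 0 < coneCuspProfile a s := by
  unfold coneCuspProfile
  split_ifs with hs
  · linarith [mul_nonneg_of_nonpos_of_nonpos ha hs]
  · exact Real.exp_pos _

theorem hasDerivAt_coneCuspProfile (a s : ℝ) :
    HasDerivAt (coneCuspProfile a) (if s ≤ 0 then a else a * Real.exp (a * s)) s :=
  hasDerivAt_ite_le (g' := fun _ => a) (h' := fun s => a * Real.exp (a * s))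
    (fun s => by simpa using ((hasDerivAt_id s).const_mul a).const_add 1)
    (fun s => by simpa [mul_comm] using ((hasDerivAt_id s).const_mul a).exp) (by simp) (by simp) s

theorem contDiff_coneCuspProfile (a : ℝ) : ContDiff ℝ 1 (coneCuspProfile a) := by
  rw [contDiff_one_iff_deriv, funext fun s => (hasDerivAt_coneCuspProfile a s).deriv]
  exact ⟨fun s => (hasDerivAt_coneCuspProfile a s).differentiableAt,
    continuous_const.if_le (by fun_prop) continuous_id continuous_const fun s hs => by simp [hs]⟩

theorem deriv_coneCuspProfile_neg (ha : a < 0) (s : ℝ) : deriv (coneCuspProfile a) s < 0 := by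
  rw [(hasDerivAt_coneCuspProfile a s).deriv]
  split_ifs
  · exact ha
  · exact mul_neg_of_neg_of_pos ha (Real.exp_pos _)

end ConeCusp

theorem cone_cusp_nontrapping_general (a b : ℝ) (ha : a < 0) (hab : a + b = 0)
    (f : ℝ → ℝ)
    (hf : ∀ s : ℝ, f s = if s ≤ 0 then 1 + a * s else Real.exp (-b * s))
    (r r' θ' r'' : ℝ → ℝ)
    (hr : ∀ t, HasDerivAt r (r' t) t)
    (hr' : ∀ t, HasDerivAt r' (r'' t) t)
    (hgeo1 : ∀ t ∈ Set.Ici (0:ℝ), r'' t - deriv f (r t) * f (r t) * (θ' t) ^ 2 = 0)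
    (hgeo2 : ∀ t ∈ Set.Ici (0:ℝ), HasDerivAt (fun s => f (r s) ^ 2 * θ' s) 0 t)
    (hne : (r' 0, θ' 0) ≠ (0, 0)) :
    ¬ ∃ M : ℝ, ∀ t ∈ Set.Ici (0:ℝ), |r t| ≤ M := by
  obtain rfl : b = -a := by linarith
  obtain rfl : f = coneCuspProfile a := funext fun s => by rw [hf, neg_neg]; rfl
  exact not_exists_forall_abs_le_of_geodesic (contDiff_coneCuspProfile a)
    (coneCuspProfile_pos ha.le) (deriv_coneCuspProfile_neg ha) hr hr' hgeo1 hgeo2 hne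

/-- When `a + b = 0`, the surface of revolution with profile
`f(r) = 1 + a r` (`r ≤ 0`), `f(r) = e^{-b r}` (`r > 0`) is nontrapping:
no maximally extended nonconstant geodesic stays in a bounded region of `r`. -/
theorem cone_cusp_nontrapping (a b : ℝ) (ha : a < 0) (hb : 0 < b) (hab : a + b = 0)
    (f : ℝ → ℝ)
    (hf : ∀ s : ℝ, f s = if s ≤ 0 then 1 + a * s else Real.exp (-b * s))
    (r θ r' θ' r'' : ℝ → ℝ)
    (hr : ∀ t, HasDerivAt r (r' t) t)
    (hr' : ∀ t, HasDerivAt r' (r'' t) t)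
    (hθ : ∀ t, HasDerivAt θ (θ' t) t)
    (hgeo1 : ∀ t ∈ Set.Ici (0:ℝ), r'' t - deriv f (r t) * f (r t) * (θ' t) ^ 2 = 0)
    (hgeo2 : ∀ t ∈ Set.Ici (0:ℝ), HasDerivAt (fun s => f (r s) ^ 2 * θ' s) 0 t)
    (hne : (r' 0, θ' 0) ≠ (0, 0)) :
    ¬ ∃ M : ℝ, ∀ t ∈ Set.Ici (0:ℝ), |r t| ≤ M :=
  cone_cusp_nontrapping_general a b ha hab f hf r r' θ' r'' hr hr' hgeo1 hgeo2 hne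
end

section
/- Define R₁ and R₃ for fixed z > 0 and ν ∈ ℂ (ν not a nonpositive integer shifted) by I_ν(z) = (z/2)^ν (1+R₁)/Γ(1+ν) and I'_ν(z) = (ν/z)(z/2)^ν (1+R₃)/Γ(1+ν). Then R₁ − R₃ = −z²/(2ν²) + O(1/|ν|³) as |ν| → ∞ with Re ν ≥ 0. -/
/-!
Write `I_ν(t) = (t/2)^ν / Γ(ν+1) · ₀F₁(ν+1; t²/4)`, so that `1 + R₁ = ₀F₁(ν+1; z²/4)`.
Termwise differentiation gives the recurrence `I'_ν = (ν/t) I_ν + I_{ν+1}`, hence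
`R₁ - R₃ = -z²/(2ν(ν+1)) · ₀F₁(ν+2; z²/4)`. For `Re b ≥ 1` one has `|Γ(b)/Γ(b+k)| ≤ 1/k!` and
`|Γ(b)/Γ(b+k+1)| ≤ 1/(|b| k!)`, so `|₀F₁(b; x) - 1| ≤ e^{|x|}/|b|`.
Since `|ν| ≤ |ν + n|` for `Re ν ≥ 0`,
`R₁ - R₃ + z²/(2ν²) = z²/(2ν²(ν+1)) - z²/(2ν(ν+1)) · (₀F₁(ν+2; z²/4) - 1) = O(|ν|⁻³)`.
-/

open Filter Asymptotics

/-- The modified Bessel function of the first kind. -/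
noncomputable def besselI (ν : ℂ) (z : ℝ) : ℂ :=
  ∑' k : ℕ, ((z : ℂ) / 2) ^ (ν + 2 * (k : ℂ)) /
    ((k.factorial : ℂ) * Complex.Gamma (ν + k + 1))

/-- Derivative of `I_ν` in the argument `z`. -/
noncomputable def besselI' (ν : ℂ) (z : ℝ) : ℂ := deriv (fun t : ℝ => besselI ν t) z

open Complex
open scoped Nat

theorem factorial_mul_norm_Gamma_le_norm_Gamma_add {b : ℂ} (hb : 1 ≤ b.re) (k : ℕ) :
    k ! * ‖Gamma b‖ ≤ ‖Gamma (b + k)‖ := by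
  induction k with
  | zero => simp
  | succ k ih =>
    have hre : (k : ℝ) + 1 ≤ (b + k).re := by simp; linarith
    have hne : b + k ≠ 0 := fun h => by simp [h] at hre; linarith
    rw [Nat.cast_succ, ← add_assoc, Gamma_add_one _ hne, norm_mul, Nat.factorial_succ,
      Nat.cast_mul, Nat.cast_succ, mul_assoc]
    exact mul_le_mul (hre.trans (re_le_norm _)) ih (by positivity) (norm_nonneg _)

theorem norm_Gamma_div_Gamma_add_le {b : ℂ} (hb : 1 ≤ b.re) (k : ℕ) :
    ‖Gamma b / Gamma (b + k)‖ ≤ 1 / k ! := by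
  have hΓ : 0 < k ! * ‖Gamma b‖ :=
    mul_pos (by positivity) (norm_pos_iff.2 (Gamma_ne_zero_of_re_pos (by linarith)))
  have hle := factorial_mul_norm_Gamma_le_norm_Gamma_add hb k
  rw [norm_div, div_le_div_iff₀ (hΓ.trans_le hle) (by positivity), one_mul, mul_comm]
  exact hle

theorem norm_Gamma_div_Gamma_add_add_one_le {b : ℂ} (hb : 1 ≤ b.re) (k : ℕ) :
    ‖Gamma b / Gamma (b + k + 1)‖ ≤ ‖b‖⁻¹ * (1 / k !) := by
  have hb0 : b ≠ 0 := fun h => by simp [h] at hb; linarith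
  have h := norm_Gamma_div_Gamma_add_le (b := b + 1) (by simp; linarith) k
  rw [Gamma_add_one _ hb0, add_right_comm, mul_div_assoc, norm_mul] at h
  rwa [← le_inv_mul_iff₀ (norm_pos_iff.2 hb0)] at h

/-- `Γ b / Γ (b + k)` is the reciprocal Pochhammer symbol `1 / (b)_k` away from the poles of `Γ`. -/
noncomputable def hypergeometric0F1Term (b x : ℂ) (k : ℕ) : ℂ :=
  Gamma b / Gamma (b + k) * x ^ k / k !

noncomputable def hypergeometric0F1 (b x : ℂ) : ℂ :=
  ∑' k, hypergeometric0F1Term b x k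

theorem norm_hypergeometric0F1Term_le {b : ℂ} (hb : 1 ≤ b.re) (x : ℂ) (k : ℕ) :
    ‖hypergeometric0F1Term b x k‖ ≤ ‖x‖ ^ k / k ! := by
  rw [hypergeometric0F1Term, norm_div, norm_mul, norm_pow, Complex.norm_natCast]
  gcongr
  calc ‖Gamma b / Gamma (b + k)‖ * ‖x‖ ^ k ≤ 1 * ‖x‖ ^ k := by
        gcongr
        exact (norm_Gamma_div_Gamma_add_le hb k).trans
          (div_le_one_of_le₀ (by exact_mod_cast k.factorial_pos) (by positivity))
    _ = ‖x‖ ^ k := one_mul _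

theorem norm_hypergeometric0F1Term_add_one_le {b : ℂ} (hb : 1 ≤ b.re) (x : ℂ) (k : ℕ) :
    ‖hypergeometric0F1Term b x (k + 1)‖ ≤ ‖b‖⁻¹ * (‖x‖ ^ (k + 1) / (k + 1) !) := by
  rw [hypergeometric0F1Term, norm_div, norm_mul, norm_pow, Complex.norm_natCast, Nat.cast_succ,
    ← add_assoc]
  calc ‖Gamma b / Gamma (b + k + 1)‖ * ‖x‖ ^ (k + 1) / (k + 1) !
      ≤ ‖b‖⁻¹ * (1 / k !) * ‖x‖ ^ (k + 1) / (k + 1) ! := by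
        gcongr; exact norm_Gamma_div_Gamma_add_add_one_le hb k
    _ ≤ ‖b‖⁻¹ * (‖x‖ ^ (k + 1) / (k + 1) !) := by
        rw [mul_div_assoc, mul_assoc]
        gcongr
        rw [div_mul_eq_mul_div, one_mul]
        exact div_le_self (by positivity) (by exact_mod_cast k.factorial_pos)

theorem summable_hypergeometric0F1Term {b : ℂ} (hb : 1 ≤ b.re) (x : ℂ) :
    Summable (hypergeometric0F1Term b x) :=
  .of_norm_bounded (Real.summable_pow_div_factorial ‖x‖) (norm_hypergeometric0F1Term_le hb x)

theorem norm_hypergeometric0F1_sub_one_le {b : ℂ} (hb : 1 ≤ b.re) (x : ℂ) :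
    ‖hypergeometric0F1 b x - 1‖ ≤ Real.exp ‖x‖ / ‖b‖ := by
  have hterm0 : hypergeometric0F1Term b x 0 = 1 := by
    simp [hypergeometric0F1Term, Gamma_ne_zero_of_re_pos (by linarith : 0 < b.re)]
  have hexp : HasSum (fun k => ‖x‖ ^ (k + 1) / (k + 1) !) (Real.exp ‖x‖ - 1) := by
    have := NormedSpace.expSeries_div_hasSum_exp ‖x‖
    rw [← Real.exp_eq_exp_ℝ, ← hasSum_nat_add_iff' 1] at this
    simpa using this
  rw [hypergeometric0F1, (summable_hypergeometric0F1Term hb x).tsum_eq_zero_add, hterm0,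
    add_sub_cancel_left]
  calc ‖∑' k, hypergeometric0F1Term b x (k + 1)‖ ≤ ‖b‖⁻¹ * (Real.exp ‖x‖ - 1) :=
        tsum_of_norm_bounded (hexp.mul_left _) (norm_hypergeometric0F1Term_add_one_le hb x)
    _ ≤ Real.exp ‖x‖ / ‖b‖ := by
        rw [inv_mul_eq_div]; gcongr; linarith

noncomputable def besselTerm (ν : ℂ) (t : ℝ) (k : ℕ) : ℂ :=
  ((t : ℂ) / 2) ^ (ν + 2 * (k : ℂ)) / ((k ! : ℂ) * Gamma (ν + k + 1))

theorem besselTerm_eq_mul {ν : ℂ} (hΓ : Gamma (ν + 1) ≠ 0) {t : ℝ} (ht : t ≠ 0) (k : ℕ) :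
    besselTerm ν t k =
      ((t : ℂ) / 2) ^ ν / Gamma (ν + 1) * hypergeometric0F1Term (ν + 1) (((t : ℂ) / 2) ^ 2) k := by
  have ht2 : (t : ℂ) / 2 ≠ 0 := by simpa using ht
  rw [besselTerm, hypergeometric0F1Term, cpow_add _ _ ht2, ← pow_mul,
    show (2 * (k : ℂ)) = ((2 * k : ℕ) : ℂ) by push_cast; ring, cpow_natCast, add_right_comm]
  field_simp

theorem besselI_eq_mul_hypergeometric0F1 {ν : ℂ} (hΓ : Gamma (ν + 1) ≠ 0) {t : ℝ} (ht : t ≠ 0) :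
    besselI ν t =
      ((t : ℂ) / 2) ^ ν / Gamma (ν + 1) * hypergeometric0F1 (ν + 1) (((t : ℂ) / 2) ^ 2) := by
  rw [hypergeometric0F1, ← tsum_mul_left]
  exact tsum_congr (besselTerm_eq_mul hΓ ht)

theorem summable_besselTerm {ν : ℂ} (hν : 0 ≤ ν.re) {t : ℝ} (ht : t ≠ 0) :
    Summable (besselTerm ν t) := by
  have hΓ : Gamma (ν + 1) ≠ 0 := Gamma_ne_zero_of_re_pos (by simp; linarith)
  rw [funext (besselTerm_eq_mul hΓ ht)]
  exact (summable_hypergeometric0F1Term (by simpa using hν) _).mul_left _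

theorem hasSum_besselTerm {ν : ℂ} (hν : 0 ≤ ν.re) {t : ℝ} (ht : t ≠ 0) :
    HasSum (besselTerm ν t) (besselI ν t) :=
  (summable_besselTerm hν ht).hasSum

theorem norm_besselTerm_le {ν : ℂ} (hν : 0 ≤ ν.re) {t b : ℝ} (ht : 0 < t) (htb : t ≤ b) (k : ℕ) :
    ‖besselTerm ν t k‖ ≤ (b / 2) ^ ν.re / ‖Gamma (ν + 1)‖ * (((b / 2) ^ 2) ^ k / k !) := by
  have hΓ : Gamma (ν + 1) ≠ 0 := Gamma_ne_zero_of_re_pos (by simp; linarith)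
  have ht2 : (t : ℂ) / 2 = ((t / 2 : ℝ) : ℂ) := by push_cast; ring
  rw [besselTerm_eq_mul hΓ ht.ne', norm_mul, norm_div, ht2,
    norm_cpow_eq_rpow_re_of_pos (by positivity)]
  have hb : 0 < b := ht.trans_le htb
  refine mul_le_mul (by gcongr) ?_ (norm_nonneg _) (by positivity)
  refine (norm_hypergeometric0F1Term_le (b := ν + 1) (by simpa using hν) _ k).trans ?_
  rw [norm_pow, Complex.norm_real, Real.norm_of_nonneg (by positivity)]
  gcongr

theorem besselTerm_add_one (ν : ℂ) {t : ℝ} (ht : t ≠ 0) (k : ℕ) :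
    2 * (k + 1 : ℂ) / t * besselTerm ν t (k + 1) = besselTerm (ν + 1) t k := by
  have ht2 : (t : ℂ) / 2 ≠ 0 := by simpa using ht
  have hexp : ν + 2 * ((k + 1 : ℕ) : ℂ) = ν + 1 + 2 * (k : ℂ) + 1 := by push_cast; ring
  rw [besselTerm, besselTerm, hexp, cpow_add _ _ ht2, cpow_one, Nat.factorial_succ]
  push_cast
  rw [show ν + (k + 1) + 1 = ν + 1 + k + 1 by ring]
  field_simp
  rw [mul_assoc, mul_div_mul_left _ _ (ofReal_ne_zero.2 ht)]

theorem hasDerivAt_besselTerm (ν : ℂ) {t : ℝ} (ht : 0 < t) (k : ℕ) :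
    HasDerivAt (fun s : ℝ => besselTerm ν s k) ((ν + 2 * k) / t * besselTerm ν t k) t := by
  have ht2 : (t : ℂ) / 2 ≠ 0 := by simpa using ht.ne'
  have hslit : (t : ℂ) / 2 ∈ slitPlane := by
    rw [show (t : ℂ) / 2 = ((t / 2 : ℝ) : ℂ) by push_cast; ring]
    exact ofReal_mem_slitPlane.2 (by positivity)
  have h := (((hasDerivAt_id (t : ℂ)).div_const 2).cpow_const (c := ν + 2 * k) hslit).comp_ofReal
  refine (h.div_const ((k ! : ℂ) * Gamma (ν + k + 1))).congr_deriv ?_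
  simp only [besselTerm, id, cpow_sub _ _ ht2, cpow_one]
  field_simp

theorem norm_deriv_besselTerm_le {ν : ℂ} (hν : 0 ≤ ν.re) {t y : ℝ} (ht : 0 < t)
    (hy : y ∈ Set.Ioo (t / 2) (2 * t)) (k : ℕ) :
    ‖(ν + 2 * k) / y * besselTerm ν y k‖ ≤
      2 * (‖ν‖ + 2) / t * (t ^ ν.re / ‖Gamma (ν + 1)‖) * ((2 * t ^ 2) ^ k / k !) := by
  have hy0 : 0 < y := (half_pos ht).trans hy.1
  have hcoef : ‖(ν + 2 * k) / y‖ ≤ 2 * (‖ν‖ + 2) / t * 2 ^ k := by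
    have hk : (k : ℝ) ≤ 2 ^ k := by exact_mod_cast Nat.lt_two_pow_self.le
    have hone : (1 : ℝ) ≤ 2 ^ k := one_le_pow₀ (by norm_num)
    have hnum : ‖ν + 2 * k‖ ≤ (‖ν‖ + 2) * 2 ^ k := by
      calc ‖ν + 2 * k‖ ≤ ‖ν‖ + 2 * k := by simpa using norm_add_le ν (2 * k)
        _ ≤ (‖ν‖ + 2) * 2 ^ k := by nlinarith [norm_nonneg ν]
    rw [norm_div, Complex.norm_real, Real.norm_of_nonneg hy0.le, div_le_iff₀ hy0]
    calc ‖ν + 2 * k‖ ≤ (‖ν‖ + 2) * 2 ^ k := hnum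
      _ ≤ 2 * (‖ν‖ + 2) / t * 2 ^ k * y := by
        rw [show 2 * (‖ν‖ + 2) / t * 2 ^ k * y = (‖ν‖ + 2) * 2 ^ k * (2 * y / t) by ring]
        refine le_mul_of_one_le_right (by positivity) ?_
        rw [le_div_iff₀ ht]; linarith [hy.1]
  have hterm := norm_besselTerm_le hν hy0 hy.2.le k
  rw [show 2 * t / 2 = t by ring] at hterm
  rw [norm_mul]
  calc ‖(ν + 2 * k) / y‖ * ‖besselTerm ν y k‖
      ≤ 2 * (‖ν‖ + 2) / t * 2 ^ k * (t ^ ν.re / ‖Gamma (ν + 1)‖ * ((t ^ 2) ^ k / k !)) :=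
        mul_le_mul hcoef hterm (norm_nonneg _) (by positivity)
    _ = _ := by rw [mul_pow]; ring

theorem hasSum_deriv_besselTerm {ν : ℂ} (hν : 0 ≤ ν.re) {t : ℝ} (ht : t ≠ 0) :
    HasSum (fun k : ℕ => (ν + 2 * k) / t * besselTerm ν t k)
      (ν / t * besselI ν t + besselI (ν + 1) t) := by
  have hI : HasSum (fun k => ν / t * besselTerm ν t k) (ν / t * besselI ν t) :=
    (hasSum_besselTerm hν ht).mul_left _
  have hIsucc : HasSum (fun k : ℕ => 2 * k / t * besselTerm ν t k) (besselI (ν + 1) t) := by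
    rw [← hasSum_nat_add_iff' 1]
    simpa [besselTerm_add_one ν ht] using hasSum_besselTerm (ν := ν + 1) (by simp; linarith) ht
  convert hI.add hIsucc using 1
  ext k
  ring

theorem hasDerivAt_besselI {ν : ℂ} (hν : 0 ≤ ν.re) {t : ℝ} (ht : 0 < t) :
    HasDerivAt (fun s : ℝ => besselI ν s) (ν / t * besselI ν t + besselI (ν + 1) t) t := by
  have hmem : t ∈ Set.Ioo (t / 2) (2 * t) := ⟨by linarith, by linarith⟩
  have h := hasDerivAt_tsum_of_isPreconnected
    ((Real.summable_pow_div_factorial (2 * t ^ 2)).mul_left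
      (2 * (‖ν‖ + 2) / t * (t ^ ν.re / ‖Gamma (ν + 1)‖)))
    isOpen_Ioo isPreconnected_Ioo
    (fun k y hy => hasDerivAt_besselTerm ν ((half_pos ht).trans hy.1) k)
    (fun k y hy => norm_deriv_besselTerm_le hν ht hy k) hmem
    (summable_besselTerm hν ht.ne') hmem
  rwa [(hasSum_deriv_besselTerm hν ht.ne').tsum_eq] at h

theorem besselI'_eq_mul_hypergeometric0F1 {ν : ℂ} (hν : 0 ≤ ν.re) {t : ℝ} (ht : 0 < t) :
    besselI' ν t = ((t : ℂ) / 2) ^ ν / Gamma (ν + 1) *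
      (ν / t * hypergeometric0F1 (ν + 1) (((t : ℂ) / 2) ^ 2) +
        t / (2 * (ν + 1)) * hypergeometric0F1 (ν + 2) (((t : ℂ) / 2) ^ 2)) := by
  have hν1 : ν + 1 ≠ 0 := fun h => by have := congrArg re h; simp at this; linarith
  have hΓ : Gamma (ν + 1) ≠ 0 := Gamma_ne_zero_of_re_pos (by simp; linarith)
  have hΓ1 : Gamma (ν + 1 + 1) ≠ 0 := Gamma_ne_zero_of_re_pos (by simp; linarith)
  have ht2 : (t : ℂ) / 2 ≠ 0 := by simpa using ht.ne'
  rw [besselI', (hasDerivAt_besselI hν ht).deriv, besselI_eq_mul_hypergeometric0F1 hΓ ht.ne',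
    besselI_eq_mul_hypergeometric0F1 hΓ1 ht.ne', cpow_add _ _ ht2, cpow_one,
    Gamma_add_one _ hν1, show ν + 1 + 1 = ν + 2 by ring]
  field_simp

theorem norm_le_norm_add_natCast {ν : ℂ} (hν : 0 ≤ ν.re) (n : ℕ) : ‖ν‖ ≤ ‖ν + n‖ := by
  rw [← sq_le_sq₀ (norm_nonneg _) (norm_nonneg _), Complex.sq_norm, Complex.sq_norm,
    normSq_apply, normSq_apply]
  simp only [add_re, natCast_re, add_im, natCast_im, add_zero]
  nlinarith [n.cast_nonneg (α := ℝ)]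

theorem eventually_re_nonneg_and_ne_zero :
    ∀ᶠ ν in comap norm atTop ⊓ 𝓟 {ν : ℂ | 0 ≤ ν.re}, 0 ≤ ν.re ∧ ν ≠ 0 :=
  eventually_inf_principal.2 <|
    (tendsto_comap.eventually (eventually_gt_atTop 0)).mono fun _ h hre =>
      ⟨hre, norm_pos_iff.1 h⟩

theorem isBigO_div_sq_sub_div_mul_hypergeometric0F1 (w x : ℂ) :
    (fun ν : ℂ => w / (2 * ν ^ 2) - w / (2 * ν * (ν + 1)) * hypergeometric0F1 (ν + 2) x)
      =O[comap norm atTop ⊓ 𝓟 {ν : ℂ | 0 ≤ ν.re}] (fun ν => 1 / ν ^ 3) := by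
  refine IsBigO.of_bound (‖w‖ / 2 * (1 + Real.exp ‖x‖)) ?_
  filter_upwards [eventually_re_nonneg_and_ne_zero] with ν ⟨hν, hν0⟩
  have hν1 : ‖ν‖ ≤ ‖ν + 1‖ := by simpa using norm_le_norm_add_natCast hν 1
  have hν2 : ‖ν‖ ≤ ‖ν + 2‖ := by simpa using norm_le_norm_add_natCast hν 2
  have hΦ : ‖hypergeometric0F1 (ν + 2) x - 1‖ ≤ Real.exp ‖x‖ / ‖ν‖ :=
    (norm_hypergeometric0F1_sub_one_le (by simp; linarith) x).trans (by gcongr)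
  have hid : w / (2 * ν ^ 2) - w / (2 * ν * (ν + 1)) * hypergeometric0F1 (ν + 2) x =
      w / (2 * ν) * (1 / (ν * (ν + 1)) - (hypergeometric0F1 (ν + 2) x - 1) / (ν + 1)) := by
    have : ν + 1 ≠ 0 := norm_pos_iff.1 ((norm_pos_iff.2 hν0).trans_le hν1)
    field_simp
    ring
  rw [hid, norm_mul]
  calc ‖w / (2 * ν)‖ * ‖1 / (ν * (ν + 1)) - (hypergeometric0F1 (ν + 2) x - 1) / (ν + 1)‖
      ≤ ‖w‖ / (2 * ‖ν‖) * (1 / (‖ν‖ * ‖ν‖) + Real.exp ‖x‖ / ‖ν‖ / ‖ν‖) := by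
        rw [norm_div, norm_mul, Complex.norm_ofNat]
        gcongr
        refine (norm_sub_le _ _).trans (add_le_add ?_ ?_)
        · rw [norm_div, norm_one, norm_mul]; gcongr
        · rw [norm_div]; gcongr
    _ = ‖w‖ / 2 * (1 + Real.exp ‖x‖) * ‖1 / ν ^ 3‖ := by
        rw [norm_div, norm_one, norm_pow]
        field_simp

/-- For fixed `z > 0`, with `R₁, R₃` defined by `I_ν(z) = (z/2)^ν (1+R₁)/Γ(1+ν)` and
`I'_ν(z) = (ν/z)(z/2)^ν (1+R₃)/Γ(1+ν)`, one has
`R₁ - R₃ = -z²/(2ν²) + O(1/|ν|³)` as `|ν| → ∞` with `Re ν ≥ 0`. -/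
theorem besselI_remainder_difference (z : ℝ) (hz : 0 < z) :
    ∃ R₁ R₃ : ℂ → ℂ,
      (∀ᶠ ν in Filter.comap (norm : ℂ → ℝ) Filter.atTop ⊓ 𝓟 {ν : ℂ | 0 ≤ ν.re},
        besselI ν z = ((z : ℂ) / 2) ^ ν * (1 + R₁ ν) / Complex.Gamma (1 + ν)) ∧
      (∀ᶠ ν in Filter.comap (norm : ℂ → ℝ) Filter.atTop ⊓ 𝓟 {ν : ℂ | 0 ≤ ν.re},
        besselI' ν z = ν / z * ((z : ℂ) / 2) ^ ν * (1 + R₃ ν) / Complex.Gamma (1 + ν)) ∧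
      (fun ν => R₁ ν - R₃ ν + (z : ℂ) ^ 2 / (2 * ν ^ 2))
        =O[Filter.comap (norm : ℂ → ℝ) Filter.atTop ⊓ 𝓟 {ν : ℂ | 0 ≤ ν.re}]
        (fun ν => 1 / ν ^ 3) := by
  refine ⟨fun ν => hypergeometric0F1 (ν + 1) ((z / 2) ^ 2) - 1,
    fun ν => hypergeometric0F1 (ν + 1) ((z / 2) ^ 2) - 1 +
      z ^ 2 / (2 * ν * (ν + 1)) * hypergeometric0F1 (ν + 2) ((z / 2) ^ 2), ?_, ?_, ?_⟩
  · filter_upwards [eventually_re_nonneg_and_ne_zero] with ν ⟨hν, _⟩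
    rw [besselI_eq_mul_hypergeometric0F1 (Gamma_ne_zero_of_re_pos (by simp; linarith)) hz.ne',
      add_comm 1 ν]
    ring
  · filter_upwards [eventually_re_nonneg_and_ne_zero] with ν ⟨hν, hν0⟩
    rw [besselI'_eq_mul_hypergeometric0F1 hν hz, add_comm 1 ν]
    field_simp
    ring
  · exact (isBigO_div_sq_sub_div_mul_hypergeometric0F1 ((z : ℂ) ^ 2) _).congr_left fun ν => by ring
end

section
/- For ζ ∈ ℂ with Re ζ > 0 and |ζ| sufficiently large, the equation ν̃ log ν̃ = ζ has a unique solution ν̃ with Re ν̃ > 1, Re(log ν̃) > 1 and |Im(log ν̃)| < π/2, and this solution satisfies ν̃ = (ζ / log ζ)(1 + O(log log |ζ| / log |ζ|)) as Re ζ → ∞. -/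
open Filter Asymptotics Real

/-!
Writing `u = log ν̃`, the equation `ν̃ log ν̃ = ζ` becomes `u + log u = log ζ`. For `a = log |ζ|`
large, `u ↦ log ζ - log u` maps the closed disc of radius `2 log a` about `log ζ` into itself and
is a contraction there (as `Re u ≥ a / 2` on it), so Banach's fixed point theorem yields a solution
with `|log u| ≤ 2 log a`. Then `ν̃ = ζ / u = (ζ / log ζ) (1 + log u / u)` with
`|log u / u| ≤ 4 log a / a`. The condition `Re ζ > 0` forces `|Im u| < π / 2` and `Re ν̃ > 1`, and
uniqueness holds because `Re (log w + 1) > 0` on the convex half-plane `Re w > 1`.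
-/

theorem Real.mul_sin_nonneg {b : ℝ} (hb : |b| ≤ π) : 0 ≤ b * sin b := by
  rw [abs_le] at hb
  rcases le_total 0 b with h | h
  · exact mul_nonneg h (sin_nonneg_of_nonneg_of_le_pi h hb.2)
  · exact mul_nonneg_of_nonpos_of_nonpos h (sin_nonpos_of_nonpos_of_neg_pi_le h hb.1)

theorem Real.one_lt_exp_mul_cos {a b : ℝ} (ha : 1 ≤ a) (hb : |b| ≤ π)
    (h : b * sin b < a * cos b) : 1 < exp a * cos b := by
  have hbsin := mul_sin_nonneg hb
  have hcos : 0 < cos b := pos_of_mul_pos_right (hbsin.trans_lt h) (by linarith)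
  rcases le_or_gt (1 / 2) (cos b) with hcos_ge | hcos_lt
  · have := add_one_lt_exp (x := a) (by positivity)
    nlinarith
  · have hsin : 3 / 4 < sin b ^ 2 := by nlinarith [sin_sq_add_cos_sq b]
    have hsin_le : sin b ^ 2 ≤ b * sin b := by
      nlinarith [abs_sin_le_abs (x := b), abs_mul_abs_self b, abs_mul_abs_self (sin b),
        abs_nonneg (sin b), abs_mul b (sin b), abs_of_nonneg hbsin]
    nlinarith [exp_one_gt_d9, exp_one_mul_le_exp (x := a)]

theorem one_lt_re_and_abs_im_log_lt_of_re_mul_log_pos {w : ℂ}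
    (hw : 1 ≤ (Complex.log w).re) (hpos : 0 < (w * Complex.log w).re) :
    1 < w.re ∧ |(Complex.log w).im| < π / 2 := by
  set a := (Complex.log w).re
  set b := (Complex.log w).im
  have hw0 : w ≠ 0 := by rintro rfl; simp [a] at hw; linarith
  have hb : |b| ≤ π := by simpa [b, Complex.log_im] using Complex.abs_arg_le_pi w
  have hexp : Complex.exp (Complex.log w) = w := Complex.exp_log hw0
  have hre : w.re = exp a * cos b := by rw [← Complex.exp_re, hexp]
  have hkey : b * sin b < a * cos b := by
    have : (w * Complex.log w).re = exp a * (a * cos b - b * sin b) := by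
      nth_rw 1 [← hexp]; simp [Complex.exp_re, Complex.exp_im, a, b]; ring
    nlinarith [exp_pos a]
  refine ⟨hre ▸ one_lt_exp_mul_cos hw hb hkey, ?_⟩
  have hcos : 0 < cos b := by nlinarith [mul_sin_nonneg hb]
  by_contra! hge
  refine hcos.not_ge ?_
  rw [← cos_abs]
  exact cos_nonpos_of_pi_div_two_le_of_le hge (by linarith [pi_pos])

theorem Convex.injOn_of_hasDerivAt_of_re_pos {f f' : ℂ → ℂ} {s : Set ℂ} (hs : Convex ℝ s)
    (hf : ∀ z ∈ s, HasDerivAt f (f' z) z) (hf' : ∀ z ∈ s, 0 < (f' z).re) : Set.InjOn f s := by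
  intro x hx y hy hxy
  by_contra hne
  set d := y - x
  have hd : d ≠ 0 := sub_ne_zero.mpr (Ne.symm hne)
  have hmem : ∀ t ∈ Set.Icc (0 : ℝ) 1, x + t * d ∈ s := fun t ht => by
    simpa [d, AffineMap.lineMap_apply_module', smul_eq_mul, add_comm] using
      hs.lineMap_mem hx hy ht
  -- `Re (conj d * f)` has derivative `‖d‖² Re f' > 0` along the segment from `x` to `y`
  set φ : ℝ → ℝ := fun t => (starRingEnd ℂ d * f (x + t * d)).re
  have hφ : ∀ t ∈ Set.Icc (0 : ℝ) 1, HasDerivAt φ (‖d‖ ^ 2 * (f' (x + t * d)).re) t := by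
    intro t ht
    have hline : HasDerivAt (fun t : ℝ => x + t * d) d t := by
      simpa using ((hasDerivAt_id (t : ℂ)).comp_ofReal.mul_const d).const_add x
    have := Complex.reCLM.hasFDerivAt.comp_hasDerivAt t
      (((hf _ (hmem t ht)).comp t hline).const_mul (starRingEnd ℂ d))
    refine this.congr_deriv ?_
    rw [Complex.reCLM_apply, mul_left_comm, Complex.conj_mul', ← Complex.ofReal_pow,
      Complex.re_mul_ofReal, mul_comm]
  obtain ⟨c, hc, hslope⟩ := exists_hasDerivAt_eq_slope φ _ zero_lt_one
    (fun t ht => (hφ t ht).continuousAt.continuousWithinAt)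
    (fun t ht => hφ t (Set.Ioo_subset_Icc_self ht))
  have hφ01 : φ 1 = φ 0 := by simp [φ, d, hxy]
  rw [hφ01, sub_self, zero_div] at hslope
  exact (mul_pos (pow_pos (norm_pos_iff.mpr hd) 2)
    (hf' _ (hmem c (Set.Ioo_subset_Icc_self hc)))).ne' hslope

theorem injOn_mul_log : Set.InjOn (fun w : ℂ => w * Complex.log w) {w | 1 < w.re} := by
  refine (convex_halfSpace_re_gt 1).injOn_of_hasDerivAt_of_re_pos
    (f' := fun w => Complex.log w + 1) (fun w hw => ?_) (fun w hw => ?_)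
  · have hslit : w ∈ Complex.slitPlane := Or.inl (by linarith [hw.out])
    have := (hasDerivAt_id' w).mul (Complex.hasDerivAt_log hslit)
    rw [mul_inv_cancel₀ (Complex.slitPlane_ne_zero hslit), one_mul] at this
    exact this
  · have : 1 < ‖w‖ := hw.out.trans_le (Complex.re_le_norm w)
    simp only [Complex.add_re, Complex.log_re, Complex.one_re]
    linarith [Real.log_pos this]

-- Outside the image of the half-plane `1 < Re w` the value is arbitrary.
noncomputable def invMulLog : ℂ → ℂ :=
  Function.invFunOn (fun w : ℂ => w * Complex.log w) {w | 1 < w.re}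

theorem invMulLog_mul_log {w : ℂ} (hw : 1 < w.re) : invMulLog (w * Complex.log w) = w :=
  injOn_mul_log.leftInvOn_invFunOn hw

theorem LipschitzOnWith.exists_isFixedPt {α : Type*} [MetricSpace α] {f : α → α} {K : NNReal}
    {s : Set α} {x : α} (hs : IsComplete s) (hx : x ∈ s) (hK : K < 1)
    (hf : LipschitzOnWith K f s) (hmaps : Set.MapsTo f s s) :
    ∃ y ∈ s, Function.IsFixedPt f y := by
  obtain ⟨y, hy, hfix, -⟩ := ContractingWith.exists_fixedPoint' hs hmaps
    ⟨hK, hf.mapsToRestrict hmaps⟩ hx (edist_ne_top _ _)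
  exact ⟨y, hy, hfix⟩

theorem norm_log_sub_log_le {u v : ℂ} {r : ℝ} (hr : 0 < r) (hu : r ≤ u.re) (hv : r ≤ v.re) :
    ‖Complex.log u - Complex.log v‖ ≤ ‖u - v‖ / r := by
  have hslit : ∀ z ∈ {z : ℂ | r ≤ z.re}, z ∈ Complex.slitPlane := fun z hz =>
    Or.inl (hr.trans_le hz)
  have := (convex_halfSpace_re_ge r).norm_image_sub_le_of_norm_hasDerivWithin_le (C := r⁻¹)
    (fun z hz => (Complex.hasDerivAt_log (hslit z hz)).hasDerivWithinAt)
    (fun z (hz : r ≤ z.re) => ?_) hv hu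
  · simpa [div_eq_inv_mul] using this
  · rw [norm_inv]
    exact inv_anti₀ hr (hz.trans (Complex.re_le_norm z))

theorem norm_log_le_log_norm_add_pi_div_two {u : ℂ} (hu : 0 < u.re) (h1 : 1 ≤ ‖u‖) :
    ‖Complex.log u‖ ≤ Real.log ‖u‖ + π / 2 := by
  have harg : |u.arg| < π / 2 := Complex.abs_arg_lt_pi_div_two_iff.mpr (Or.inl hu)
  calc ‖Complex.log u‖ ≤ |(Complex.log u).re| + |(Complex.log u).im| :=
        Complex.norm_le_abs_re_add_abs_im _
    _ ≤ Real.log ‖u‖ + π / 2 := by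
        rw [Complex.log_re, Complex.log_im, abs_of_nonneg (Real.log_nonneg h1)]
        linarith

theorem exists_add_log_eq {L : ℂ} (hL : |L.im| ≤ π / 2) (h3 : 3 ≤ Real.log L.re)
    (h4 : 4 * Real.log L.re ≤ L.re) :
    ∃ u : ℂ, u + Complex.log u = L ∧ L.re / 2 ≤ u.re ∧ ‖Complex.log u‖ ≤ 2 * Real.log L.re := by
  set a := L.re
  set B := Metric.closedBall L (2 * Real.log a)
  have hre : ∀ u ∈ B, a / 2 ≤ u.re := fun u hu => by
    have := Complex.abs_re_le_norm (u - L)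
    rw [Metric.mem_closedBall, dist_eq_norm] at hu
    rw [Complex.sub_re, abs_le] at this
    linarith
  have hnorm : ∀ u ∈ B, ‖u‖ ≤ 2 * a := fun u hu => by
    have hL' : ‖L‖ ≤ a + π / 2 := by
      calc ‖L‖ ≤ |L.re| + |L.im| := Complex.norm_le_abs_re_add_abs_im L
        _ ≤ a + π / 2 := by rw [abs_of_nonneg (by linarith)]; linarith
    linarith [norm_le_of_mem_closedBall hu, pi_le_four]
  have hlog : ∀ u ∈ B, ‖Complex.log u‖ ≤ 2 * Real.log a := fun u hu => by
    have h1 : 1 ≤ ‖u‖ := (by linarith [hre u hu] : 1 ≤ u.re).trans (Complex.re_le_norm u)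
    calc ‖Complex.log u‖ ≤ Real.log ‖u‖ + π / 2 :=
          norm_log_le_log_norm_add_pi_div_two (by linarith [hre u hu]) h1
      _ ≤ Real.log (2 * a) + 2 := by gcongr; exacts [hnorm u hu, by linarith [pi_le_four]]
      _ = Real.log 2 + Real.log a + 2 := by rw [Real.log_mul two_ne_zero (by linarith)]
      _ ≤ 2 * Real.log a := by linarith [Real.log_two_lt_d9]
  have hmaps : Set.MapsTo (fun u => L - Complex.log u) B B := fun u hu => by
    rw [Metric.mem_closedBall, dist_eq_norm, sub_sub_cancel_left, norm_neg]
    exact hlog u hu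
  have hlip : LipschitzOnWith (1 / 2) (fun u => L - Complex.log u) B := by
    refine LipschitzOnWith.of_dist_le_mul fun u hu v hv => ?_
    rw [dist_eq_norm, dist_eq_norm, sub_sub_sub_cancel_left, norm_sub_rev u v]
    calc ‖Complex.log v - Complex.log u‖ ≤ ‖v - u‖ / (a / 2) :=
          norm_log_sub_log_le (by linarith) (hre v hv) (hre u hu)
      _ ≤ ((1 / 2 : NNReal) : ℝ) * ‖v - u‖ := by
          rw [div_le_iff₀ (by linarith)]; push_cast; nlinarith [norm_nonneg (v - u)]
  obtain ⟨u, hu, hfix⟩ := hlip.exists_isFixedPt Metric.isClosed_closedBall.isComplete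
    (Metric.mem_closedBall_self (by linarith)) (by norm_num) hmaps
  exact ⟨u, eq_sub_iff_add_eq.mp hfix.eq.symm, hre u hu, hlog u hu⟩

theorem exists_mul_log_eq {ζ : ℂ} (hζ : 0 < ζ.re) (h3 : 3 ≤ Real.log (Real.log ‖ζ‖))
    (h4 : 4 * Real.log (Real.log ‖ζ‖) ≤ Real.log ‖ζ‖) :
    ∃ w : ℂ, w * Complex.log w = ζ ∧ Complex.log w + Complex.log (Complex.log w) = Complex.log ζ ∧
      Real.log ‖ζ‖ / 2 ≤ (Complex.log w).re ∧
      ‖Complex.log (Complex.log w)‖ ≤ 2 * Real.log (Real.log ‖ζ‖) := by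
  have hζ0 : ζ ≠ 0 := by rintro rfl; simp at hζ
  have hargζ : |ζ.arg| < π / 2 := Complex.abs_arg_lt_pi_div_two_iff.mpr (Or.inl hζ)
  obtain ⟨u, hu, hre, hlog⟩ := exists_add_log_eq (L := Complex.log ζ)
    (by rw [Complex.log_im]; exact hargζ.le) (by rwa [Complex.log_re]) (by rwa [Complex.log_re])
  rw [Complex.log_re] at hre hlog
  have hu0 : 0 < u.re := by linarith
  have hargu : |u.arg| < π / 2 := Complex.abs_arg_lt_pi_div_two_iff.mpr (Or.inl hu0)
  -- `Im u = arg ζ - arg u` with both arguments in `(-π/2, π/2)`, hence `log (exp u) = u`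
  have him : u.im = ζ.arg - u.arg := by
    have := congrArg Complex.im hu
    rw [Complex.add_im, Complex.log_im, Complex.log_im] at this
    linarith
  rw [abs_lt] at hargζ hargu
  have hlogexp : Complex.log (Complex.exp u) = u := Complex.log_exp (by linarith) (by linarith)
  refine ⟨Complex.exp u, ?_, ?_, ?_, ?_⟩ <;> rw [hlogexp]
  · have hu0' : u ≠ 0 := by rintro rfl; simp at hu0
    rw [← Complex.exp_log hζ0, ← hu, Complex.exp_add, Complex.exp_log hu0']
  exacts [hu, hre, hlog]

theorem invMulLog_spec {ζ : ℂ} (hζ : 0 < ζ.re) (h3 : 3 ≤ Real.log (Real.log ‖ζ‖))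
    (h4 : 4 * Real.log (Real.log ‖ζ‖) ≤ Real.log ‖ζ‖) :
    invMulLog ζ * Complex.log (invMulLog ζ) = ζ ∧ 1 < (invMulLog ζ).re ∧
      |(Complex.log (invMulLog ζ)).im| < π / 2 ∧
      Complex.log (invMulLog ζ) + Complex.log (Complex.log (invMulLog ζ)) = Complex.log ζ ∧
      Real.log ‖ζ‖ / 2 ≤ (Complex.log (invMulLog ζ)).re ∧
      ‖Complex.log (Complex.log (invMulLog ζ))‖ ≤ 2 * Real.log (Real.log ‖ζ‖) := by
  obtain ⟨w, hw, hlog, hre, hbound⟩ := exists_mul_log_eq hζ h3 h4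
  obtain ⟨h1, him⟩ :=
    one_lt_re_and_abs_im_log_lt_of_re_mul_log_pos (by linarith) (hw ▸ hζ)
  have hinv : invMulLog ζ = w := hw ▸ invMulLog_mul_log h1
  rw [hinv]
  exact ⟨hw, h1, him, hlog, hre, hbound⟩

theorem eq_div_log_mul_one_add {w ζ : ℂ} (hw : w * Complex.log w = ζ)
    (hlog : Complex.log w + Complex.log (Complex.log w) = Complex.log ζ)
    (hw0 : Complex.log w ≠ 0) (hζ : Complex.log ζ ≠ 0) :
    w = ζ / Complex.log ζ * (1 + Complex.log (Complex.log w) / Complex.log w) := by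
  rw [← hw, ← hlog] at *
  field_simp

theorem eventually_three_le_log_and_four_mul_log_le :
    ∀ᶠ a : ℝ in atTop, 3 ≤ Real.log a ∧ 4 * Real.log a ≤ a := by
  filter_upwards [tendsto_log_atTop.eventually_ge_atTop 3,
    isLittleO_log_id_atTop.bound (show (0 : ℝ) < 1 / 4 by norm_num), eventually_ge_atTop 0]
    with a h3 h4 ha
  rw [norm_of_nonneg (by linarith), id, norm_of_nonneg ha] at h4
  exact ⟨h3, by linarith⟩

/-- For `Re ζ > 0` and `|ζ|` large, `ν̃ log ν̃ = ζ` has a unique solution with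
`Re ν̃ > 1` (equivalently `Re log ν̃ > 1`, `|Im log ν̃| < π/2`), and this solution
satisfies `ν̃ = (ζ/log ζ)(1 + O(log log |ζ| / log |ζ|))` as `Re ζ → ∞`. -/
theorem lambert_solution_asymptotics :
    ∃ (W : ℂ → ℂ) (T : ℝ) (E : ℂ → ℂ),
      (∀ ζ : ℂ, T ≤ ‖ζ‖ → 0 < ζ.re →
        W ζ * Complex.log (W ζ) = ζ ∧
        1 < (W ζ).re ∧
        1 < (Complex.log (W ζ)).re ∧
        |(Complex.log (W ζ)).im| < Real.pi / 2 ∧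
        (∀ w : ℂ, 1 < w.re → w * Complex.log w = ζ → w = W ζ)) ∧
      (∀ᶠ ζ in Filter.comap Complex.re Filter.atTop,
        W ζ = ζ / Complex.log ζ * (1 + E ζ)) ∧
      E =O[Filter.comap Complex.re Filter.atTop]
        (fun ζ => Real.log (Real.log ‖ζ‖) / Real.log ‖ζ‖) := by
  obtain ⟨A, hA⟩ := eventually_atTop.1 eventually_three_le_log_and_four_mul_log_le
  have hsize : ∀ ζ : ℂ, exp A ≤ ‖ζ‖ →
      3 ≤ Real.log (Real.log ‖ζ‖) ∧ 4 * Real.log (Real.log ‖ζ‖) ≤ Real.log ‖ζ‖ :=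
    fun ζ hT => hA _ ((le_log_iff_exp_le ((exp_pos A).trans_le hT)).2 hT)
  have hlarge : ∀ᶠ ζ in comap Complex.re atTop, exp A ≤ ‖ζ‖ ∧ 0 < ζ.re :=
    (tendsto_comap.eventually (eventually_ge_atTop (exp A))).mono fun ζ hζ =>
      ⟨hζ.trans (Complex.re_le_norm ζ), (exp_pos A).trans_le hζ⟩
  refine ⟨invMulLog, exp A,
    fun ζ => Complex.log (Complex.log (invMulLog ζ)) / Complex.log (invMulLog ζ),
    fun ζ hT hζ => ?_, hlarge.mono fun ζ hζ => ?_,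
    IsBigO.of_bound 4 (hlarge.mono fun ζ hζ => ?_)⟩
  · obtain ⟨h3, h4⟩ := hsize ζ hT
    obtain ⟨hw, h1, him, -, hre, -⟩ := invMulLog_spec hζ h3 h4
    exact ⟨hw, h1, by linarith, him, fun w hw' hwζ => hwζ ▸ (invMulLog_mul_log hw').symm⟩
  · obtain ⟨h3, h4⟩ := hsize ζ hζ.1
    obtain ⟨hw, -, -, hlog, hre, -⟩ := invMulLog_spec hζ.2 h3 h4
    exact eq_div_log_mul_one_add hw hlog (ne_of_apply_ne Complex.re (by simp; linarith))
      (ne_of_apply_ne Complex.re (by rw [Complex.log_re, Complex.zero_re]; linarith))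
  · obtain ⟨h3, h4⟩ := hsize ζ hζ.1
    obtain ⟨-, -, -, -, hre, hbound⟩ := invMulLog_spec hζ.2 h3 h4
    have hu := hre.trans (Complex.re_le_norm (Complex.log (invMulLog ζ)))
    rw [norm_div, norm_of_nonneg (div_nonneg (by linarith) (by linarith))]
    calc _ ≤ 2 * Real.log (Real.log ‖ζ‖) / (Real.log ‖ζ‖ / 2) :=
          div_le_div₀ (by linarith) hbound (by linarith) hu
      _ = 4 * (Real.log (Real.log ‖ζ‖) / Real.log ‖ζ‖) := by ring
end

section
/- Let (λ_k)_{k ≥ k₀} be a sequence of complex numbers satisfying Re λ_k = π b · k / log k · (1 + O(log log k / log k)) and Im λ_k = O(1), for some b > 0. Then the counting function N(λ) = #{k : λ₀ ≤ Re λ_k ≤ λ} satisfies N(λ) = (λ log λ / (π b)) (1 + O(log log λ / log λ)) as λ → ∞. -/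
/-!
Put `P = π b`, `g x = P x / log x`, `u x = log log x / log x` and `G t = t log t / P`. For large
`k` the hypotheses trap `Re λ_k` between `g k (1 - c u k)` and `g k (1 + c u k)`, and both
envelopes eventually exceed `λ₀`. Since `g` increases and `u` decreases on `[e^e, ∞)`, the
envelopes can be inverted using `log (G t) = log t + log log t + O(1)`: `Re λ_k ≤ t` forces
`k ≤ G t (1 + (2c+2) u t)`, and `k ≤ G t (1 - c u t)` forces `Re λ_k ≤ t`. So the counted set
is squeezed between two initial segments of `ℕ` whose lengths are `G t (1 + O(u t))`; the
finitely many small `k` are absorbed because `G t u t → ∞`.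
-/

open Filter Asymptotics Real Set Topology

noncomputable def logLogDivLog (x : ℝ) : ℝ := log (log x) / log x

lemma logLogDivLog_nonneg {x : ℝ} (hx : exp 1 ≤ x) : 0 ≤ logLogDivLog x := by
  have hlog : 1 ≤ log x := by rwa [le_log_iff_exp_le ((exp_pos 1).trans_le hx)]
  exact div_nonneg (log_nonneg hlog) (zero_le_one.trans hlog)

lemma antitoneOn_logLogDivLog : AntitoneOn logLogDivLog (Ici (exp (exp 1))) := by
  intro x hx y _ hxy
  have hx0 : 0 < x := (exp_pos _).trans_le hx
  have hlogx : exp 1 ≤ log x := by rwa [le_log_iff_exp_le hx0]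
  have hlog : log x ≤ log y := log_le_log hx0 hxy
  exact log_div_self_antitoneOn hlogx (hlogx.trans hlog) hlog

lemma tendsto_logLogDivLog_atTop : Tendsto logLogDivLog atTop (𝓝 0) :=
  isLittleO_log_id_atTop.tendsto_div_nhds_zero.comp tendsto_log_atTop

lemma monotoneOn_div_log : MonotoneOn (fun x : ℝ => x / log x) (Ici (exp 1)) := by
  intro x hx y hy hxy
  have hy0 : 0 < y := (exp_pos 1).trans_le hy
  have hlogy : 0 < log y := zero_lt_one.trans_le (by rwa [le_log_iff_exp_le hy0])
  simpa only [inv_div] using inv_anti₀ (div_pos hlogy hy0) (log_div_self_antitoneOn hx hy hxy)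

lemma tendsto_div_log_atTop : Tendsto (fun x : ℝ => x / log x) atTop atTop := by
  have h : Tendsto (fun x : ℝ => log x / x) atTop (𝓝[>] 0) := by
    refine tendsto_nhdsWithin_iff.2 ⟨isLittleO_log_id_atTop.tendsto_div_nhds_zero, ?_⟩
    filter_upwards [eventually_gt_atTop 1] with x hx using div_pos (log_pos hx) (by linarith)
  simpa only [Function.comp_def, inv_div] using tendsto_inv_nhdsGT_zero.comp h

lemma le_mul_log_div_mul {P t a : ℝ} (hP : 0 < P) (ht : 0 ≤ t) (hlog : P ≤ log t)
    (ha : 1 ≤ a) : t ≤ t * log t / P * a := by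
  rw [mul_div_assoc, mul_assoc]
  exact le_mul_of_one_le_right ht (one_le_mul_of_one_le_of_one_le ((one_le_div hP).2 hlog) ha)

lemma lt_div_log_mul_one_sub {P c t : ℝ} (hP : 0 < P) (hc : 0 ≤ c) (ht : 0 < t)
    (hlog : P ≤ log t) (hu : 0 ≤ logLogDivLog t) (hu_le : (2 * c + 2) * logLogDivLog t ≤ 1)
    (hloglog : log (2 / P) < log (log t)) :
    t < P * (t * log t / P * (1 + (2 * c + 2) * logLogDivLog t)) /
      log (t * log t / P * (1 + (2 * c + 2) * logLogDivLog t)) * (1 - c * logLogDivLog t) := by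
  have hL : 0 < log t := hP.trans_le hlog
  have hLu : log t * logLogDivLog t = log (log t) := by rw [logLogDivLog]; field_simp
  set L := log t
  set u := logLogDivLog t
  set a := (2 * c + 2) * u
  set X := t * L / P * (1 + a)
  have ha : 0 ≤ a := by positivity
  have htX : t ≤ X :=
    le_mul_log_div_mul hP ht.le hlog (by linarith)
  have hlogX : log X = L + log L + log ((1 + a) / P) := by
    rw [show X = t * (L * ((1 + a) / P)) by ring, log_mul ht.ne' (by positivity),
      log_mul hL.ne' (by positivity)]
    ring
  -- `log X = L + log L + O(1) < L (1 + 2u)`, and `2c + 2` makes `(1 + a) (1 - c u) ≥ 1 + 2u`.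
  have hlogX_lt : log X < L * (1 + 2 * u) := by
    have : log ((1 + a) / P) ≤ log (2 / P) := by gcongr; linarith
    rw [hlogX]; nlinarith
  have hlogX_pos : 0 < log X := log_pos (by linarith [(log_pos_iff ht.le).1 hL])
  have hcu : c * u ≤ 1 / 2 := by nlinarith
  calc t ≤ t * ((1 + a) * (1 - c * u)) / (1 + 2 * u) := by
        rw [le_div_iff₀ (by positivity)]
        have : 1 + 2 * u ≤ (1 + a) * (1 - c * u) := by nlinarith [mul_nonneg hc hu]
        nlinarith
    _ = P * X / (L * (1 + 2 * u)) * (1 - c * u) := by simp only [X]; field_simp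
    _ < P * X / log X * (1 - c * u) := by gcongr; linarith

lemma eventually_le_of_div_log_mul_one_sub_le {P c : ℝ} (hP : 0 < P) (hc : 0 ≤ c) :
    ∀ᶠ t in atTop, ∀ x : ℝ, P * x / log x * (1 - c * logLogDivLog x) ≤ t →
      x ≤ t * log t / P * (1 + (2 * c + 2) * logLogDivLog t) := by
  have hsmall := tendsto_logLogDivLog_atTop.eventually_le_const
    (show (0 : ℝ) < 1 / (2 * c + 2) by positivity)
  filter_upwards [eventually_ge_atTop (exp (exp 1)), tendsto_log_atTop.eventually_ge_atTop P,
    (tendsto_log_atTop.comp tendsto_log_atTop).eventually_gt_atTop (log (2 / P)), hsmall]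
    with t ht hlog hloglog hu_small x hx
  have ht1 : exp 1 ≤ t := (exp_le_exp.2 (one_le_exp zero_le_one)).trans ht
  have ht0 : 0 < t := (exp_pos 1).trans_le ht1
  have hu := logLogDivLog_nonneg ht1
  have hu_le : (2 * c + 2) * logLogDivLog t ≤ 1 := by
    rwa [le_div_iff₀' (by positivity)] at hu_small
  set X := t * log t / P * (1 + (2 * c + 2) * logLogDivLog t)
  have htX : t ≤ X := le_mul_log_div_mul hP ht0.le hlog (by nlinarith)
  by_contra! hXx
  have htx : t ≤ x := htX.trans hXx.le
  have hux : logLogDivLog x ≤ logLogDivLog t :=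
    antitoneOn_logLogDivLog ht (ht.trans htx) htx
  have hgX : X / log X ≤ x / log x :=
    monotoneOn_div_log (ht1.trans htX) (ht1.trans htx) hXx.le
  have hcu : 0 ≤ 1 - c * logLogDivLog t := by nlinarith
  have hx0 : 0 ≤ x / log x :=
    div_nonneg (by linarith) (log_nonneg ((one_le_exp zero_le_one).trans (ht1.trans htx)))
  have hlt : t < P * X / log X * (1 - c * logLogDivLog t) :=
    lt_div_log_mul_one_sub hP hc ht0 hlog hu hu_le hloglog
  rw [mul_div_assoc] at hlt hx
  refine lt_irrefl t ?_
  calc t < P * (X / log X) * (1 - c * logLogDivLog t) := hlt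
    _ ≤ P * (x / log x) * (1 - c * logLogDivLog x) := by gcongr
    _ ≤ t := hx

lemma eventually_div_log_mul_one_add_le {P c : ℝ} (hP : 0 < P) (hc : 0 ≤ c) :
    ∀ᶠ t in atTop, ∀ x : ℝ, exp 1 ≤ x → c * logLogDivLog x ≤ 1 / 2 →
      x ≤ t * log t / P * (1 - c * logLogDivLog t) →
        P * x / log x * (1 + c * logLogDivLog x) ≤ t := by
  filter_upwards [eventually_ge_atTop (exp (exp 1)),
    tendsto_log_atTop.eventually_ge_atTop (3 / 2 * P)] with t ht hlog x hx hcx hxY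
  have ht1 : exp 1 ≤ t := (exp_le_exp.2 (one_le_exp zero_le_one)).trans ht
  have ht0 : 0 < t := (exp_pos 1).trans_le ht1
  have hL : 0 < log t := by linarith
  have hx0 : 0 < x := (exp_pos 1).trans_le hx
  have hcux : 0 ≤ c * logLogDivLog x := mul_nonneg hc (logLogDivLog_nonneg hx)
  rw [mul_div_assoc]
  rcases le_or_gt x t with hxt | htx
  · calc P * (x / log x) * (1 + c * logLogDivLog x) ≤ P * (t / log t) * (3 / 2) :=
          mul_le_mul (mul_le_mul_of_nonneg_left (monotoneOn_div_log hx ht1 hxt) hP.le)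
            (by linarith) (by positivity) (by positivity)
      _ ≤ t := by
          rw [show P * (t / log t) * (3 / 2) = t * (3 / 2 * P) / log t by ring, div_le_iff₀ hL]
          nlinarith
  · have hux : logLogDivLog x ≤ logLogDivLog t :=
      antitoneOn_logLogDivLog ht (ht.trans htx.le) htx.le
    have hcut : c * logLogDivLog x ≤ c * logLogDivLog t := mul_le_mul_of_nonneg_left hux hc
    have hY : 0 < 1 - c * logLogDivLog t :=
      pos_of_mul_pos_right (hx0.trans_le hxY) (by positivity)
    have hgx : P * (x / log x) ≤ t * (1 - c * logLogDivLog t) := by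
      calc P * (x / log x) ≤ P * (x / log t) := by gcongr
        _ = P * x / log t := by ring
        _ ≤ P * (t * log t / P * (1 - c * logLogDivLog t)) / log t := by gcongr
        _ = t * (1 - c * logLogDivLog t) := by field_simp
    calc P * (x / log x) * (1 + c * logLogDivLog x)
        ≤ t * (1 - c * logLogDivLog t) * (1 + c * logLogDivLog t) :=
          mul_le_mul hgx (by linarith) (by positivity)
            (mul_nonneg ht0.le hY.le)
      _ ≤ t := by nlinarith [mul_nonneg ht0.le (mul_self_nonneg (c * logLogDivLog t))]

lemma Set.ncard_le_of_forall_le {S : Set ℕ} {k₁ : ℕ} {X : ℝ} (hX : 0 ≤ X)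
    (h : ∀ k ∈ S, k₁ ≤ k → (k : ℝ) ≤ X) : S.Finite ∧ (S.ncard : ℝ) ≤ k₁ + X + 1 := by
  have hsub : S ⊆ Finset.range (k₁ + ⌊X⌋₊ + 1) := by
    intro k hk
    rw [Finset.coe_range, mem_Iio]
    rcases lt_or_ge k k₁ with hk₁ | hk₁
    · omega
    · have := Nat.le_floor (h k hk hk₁)
      omega
  refine ⟨(Finset.range _).finite_toSet.subset hsub, ?_⟩
  have hcard := Set.ncard_le_ncard hsub (Finset.range _).finite_toSet
  rw [Set.ncard_coe_finset, Finset.card_range] at hcard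
  calc (S.ncard : ℝ) ≤ k₁ + ⌊X⌋₊ + 1 := by exact_mod_cast hcard
    _ ≤ k₁ + X + 1 := by gcongr; exact Nat.floor_le hX

lemma Set.Finite.sub_le_ncard {S : Set ℕ} (hS : S.Finite) {k₁ : ℕ} {Y : ℝ}
    (h : ∀ k : ℕ, k₁ ≤ k → (k : ℝ) ≤ Y → k ∈ S) : Y - k₁ ≤ S.ncard := by
  rcases lt_or_ge Y 0 with hY | hY
  · have : (0 : ℝ) ≤ k₁ := k₁.cast_nonneg
    exact (by linarith : Y - k₁ ≤ 0).trans S.ncard.cast_nonneg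
  have hsub : ↑(Finset.Icc k₁ ⌊Y⌋₊) ⊆ S := by
    intro k hk
    rw [Finset.coe_Icc, mem_Icc] at hk
    exact h k hk.1 ((Nat.le_floor_iff hY).1 hk.2)
  have hcard := Set.ncard_le_ncard hsub hS
  rw [Set.ncard_coe_finset, Nat.card_Icc] at hcard
  have : ⌊Y⌋₊ + 1 ≤ S.ncard + k₁ := by omega
  have : (⌊Y⌋₊ : ℝ) + 1 ≤ S.ncard + k₁ := by exact_mod_cast this
  linarith [Nat.lt_floor_add_one Y]

lemma isBigO_ncard_sub_of_forall {α : Type*} {l : Filter α} {S : α → Set ℕ}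
    {G X Y v : α → ℝ} (k₁ : ℕ) (hX0 : ∀ᶠ t in l, 0 ≤ X t)
    (hup : ∀ᶠ t in l, ∀ k ∈ S t, k₁ ≤ k → (k : ℝ) ≤ X t)
    (hlow : ∀ᶠ t in l, ∀ k : ℕ, k₁ ≤ k → (k : ℝ) ≤ Y t → k ∈ S t)
    (hX : (fun t => X t - G t) =O[l] v) (hY : (fun t => Y t - G t) =O[l] v)
    (hv : (fun _ => (1 : ℝ)) =O[l] v) :
    (fun t => ((S t).ncard : ℝ) - G t) =O[l] v := by
  have hbound : (fun t => ((S t).ncard : ℝ) - G t) =O[l]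
      fun t => |X t - G t| + |Y t - G t| + (k₁ + 1) := by
    refine IsBigO.of_bound 1 ?_
    filter_upwards [hX0, hup, hlow] with t hX0 hup hlow
    obtain ⟨hfin, hle⟩ := Set.ncard_le_of_forall_le hX0 hup
    have hge := hfin.sub_le_ncard hlow
    have : (0 : ℝ) ≤ k₁ := k₁.cast_nonneg
    rw [one_mul, Real.norm_eq_abs, Real.norm_of_nonneg (by positivity), abs_le]
    constructor <;> linarith [le_abs_self (X t - G t), neg_abs_le (Y t - G t),
      abs_nonneg (X t - G t), abs_nonneg (Y t - G t)]
  exact hbound.trans ((hX.abs_left.add hY.abs_left).add ((isBigO_const_one ℝ _ l).trans hv))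

lemma exists_eq_mul_one_add_of_isBigO {α : Type*} {l : Filter α} {f G v : α → ℝ}
    (hG : ∀ᶠ t in l, G t ≠ 0) (h : (fun t => f t - G t) =O[l] fun t => G t * v t) :
    ∃ E : α → ℝ, (∀ᶠ t in l, f t = G t * (1 + E t)) ∧ E =O[l] v := by
  refine ⟨fun t => (f t - G t) / G t, ?_, ?_⟩
  · filter_upwards [hG] with t ht
    field_simp
    ring
  · refine (h.mul (isBigO_refl (fun t => (G t)⁻¹) l)).congr' ?_ ?_
    · exact .of_eq (funext fun t => (div_eq_mul_inv _ _).symm)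
    · filter_upwards [hG] with t ht
      field_simp

lemma exists_envelope_of_isBigO {a r : ℕ → ℝ} {P : ℝ} (hP : 0 < P)
    (ha : ∀ᶠ k : ℕ in atTop, a k = P * k / log k * (1 + r k))
    (hr : r =O[atTop] fun k : ℕ => logLogDivLog k) :
    ∃ c, 0 ≤ c ∧ ∀ᶠ k : ℕ in atTop,
      P * k / log k * (1 - c * logLogDivLog k) ≤ a k ∧
        a k ≤ P * k / log k * (1 + c * logLogDivLog k) := by
  obtain ⟨c, hc, hrc⟩ := hr.exists_nonneg
  refine ⟨c, hc, ?_⟩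
  filter_upwards [ha, hrc.bound, tendsto_natCast_atTop_atTop.eventually_ge_atTop (exp 1)]
    with k hak hrk hk
  have hu := logLogDivLog_nonneg hk
  rw [Real.norm_eq_abs, Real.norm_of_nonneg hu, abs_le] at hrk
  have hg : 0 ≤ P * k / log k :=
    div_nonneg (by positivity) (log_nonneg ((one_le_exp zero_le_one).trans hk))
  rw [hak]
  constructor <;> gcongr <;> linarith [hrk.1, hrk.2]

lemma isBigO_one_mul_log_div_mul_logLogDivLog {P : ℝ} (hP : 0 < P) :
    (fun _ => (1 : ℝ)) =O[atTop] fun t => t * log t / P * logLogDivLog t := by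
  have hGu : Tendsto (fun t => t * log t / P * logLogDivLog t) atTop atTop := by
    refine ((tendsto_id.atTop_mul_atTop₀ (tendsto_log_atTop.comp tendsto_log_atTop)).atTop_div_const
      hP).congr' ?_
    filter_upwards [eventually_gt_atTop 1] with t ht
    have := (log_pos ht).ne'
    simp only [logLogDivLog, id, Function.comp]
    field_simp
  refine (isBigO_const_left_iff_pos_le_norm one_ne_zero).2 ⟨1, one_pos, ?_⟩
  filter_upwards [hGu.eventually_ge_atTop 1] with t ht
  rwa [Real.norm_of_nonneg (by linarith)]

theorem isBigO_ncard_sub_of_envelope {a : ℕ → ℝ} {P c : ℝ} (hP : 0 < P) (hc : 0 ≤ c)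
    (ha : ∀ᶠ k : ℕ in atTop, P * k / log k * (1 - c * logLogDivLog k) ≤ a k ∧
      a k ≤ P * k / log k * (1 + c * logLogDivLog k)) (k₀ : ℕ) (a₀ : ℝ) :
    (fun t => ({k | k₀ ≤ k ∧ a₀ ≤ a k ∧ a k ≤ t}.ncard : ℝ) - t * log t / P) =O[atTop]
      fun t => t * log t / P * logLogDivLog t := by
  have hg : Tendsto (fun k : ℕ => P * k / log k) atTop atTop := by
    simpa only [mul_div_assoc, Function.comp_def] using
      (tendsto_div_log_atTop.comp tendsto_natCast_atTop_atTop).const_mul_atTop hP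
  have hsmall : ∀ᶠ k : ℕ in atTop, c * logLogDivLog k ≤ 1 / 2 :=
    ((tendsto_logLogDivLog_atTop.comp tendsto_natCast_atTop_atTop).const_mul
      c).eventually_le_const (by norm_num)
  obtain ⟨k₁, hk₁⟩ := eventually_atTop.1 (ha.and (hsmall.and
    ((hg.eventually_ge_atTop (2 * a₀)).and ((eventually_ge_atTop k₀).and
      (tendsto_natCast_atTop_atTop.eventually_ge_atTop (exp 1))))))
  apply isBigO_ncard_sub_of_forall k₁
    (X := fun t => t * log t / P * (1 + (2 * c + 2) * logLogDivLog t))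
    (Y := fun t => t * log t / P * (1 - c * logLogDivLog t))
  · filter_upwards [eventually_ge_atTop (exp 1)] with t ht
    have := logLogDivLog_nonneg ht
    have := log_nonneg ((one_le_exp zero_le_one).trans ht)
    have := (exp_pos 1).trans_le ht
    positivity
  · filter_upwards [eventually_le_of_div_log_mul_one_sub_le hP hc] with t ht k hk hk₁k
    exact ht k ((hk₁ k hk₁k).1.1.trans hk.2.2)
  · filter_upwards [eventually_div_log_mul_one_add_le hP hc] with t ht k hk₁k hkY
    obtain ⟨⟨hlow, hup⟩, hcu, hga, hk₀, hke⟩ := hk₁ k hk₁k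
    have hg0 : 0 ≤ P * k / log k :=
      div_nonneg (by positivity) (log_nonneg ((one_le_exp zero_le_one).trans hke))
    exact ⟨hk₀, by nlinarith, hup.trans (ht k hke hcu hkY)⟩
  · exact ((isBigO_refl _ _).const_mul_left (2 * c + 2)).congr_left fun t => by ring
  · exact ((isBigO_refl _ _).const_mul_left (-c)).congr_left fun t => by ring
  · exact isBigO_one_mul_log_div_mul_logLogDivLog hP

theorem resonance_counting_general (b : ℝ) (hb : 0 < b) (k₀ : ℕ) (lam : ℕ → ℂ) (lam₀ : ℝ)
    (r : ℕ → ℝ)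
    (hre : ∀ k ≥ k₀, (lam k).re = Real.pi * b * k / Real.log k * (1 + r k))
    (hr : r =O[atTop] fun k => Real.log (Real.log k) / Real.log k) :
    ∃ E : ℝ → ℝ,
      (∀ᶠ t in atTop,
        ((Set.ncard {k : ℕ | k₀ ≤ k ∧ lam₀ ≤ (lam k).re ∧ (lam k).re ≤ t} : ℝ))
          = t * Real.log t / (Real.pi * b) * (1 + E t)) ∧
      E =O[atTop] fun t => Real.log (Real.log t) / Real.log t := by
  have hP : 0 < π * b := mul_pos pi_pos hb
  obtain ⟨c, hc, henv⟩ := exists_envelope_of_isBigO hP (eventually_atTop.2 ⟨k₀, hre⟩) hr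
  refine exists_eq_mul_one_add_of_isBigO ?_ (isBigO_ncard_sub_of_envelope hP hc henv k₀ lam₀)
  filter_upwards [eventually_gt_atTop 1] with t ht
  have := (log_pos ht).ne'
  positivity

/-- If `Re λ_k = π b k / log k (1 + O(log log k / log k))` and `Im λ_k = O(1)`, then
the counting function `N(t) = #{k : λ₀ ≤ Re λ_k ≤ t}` satisfies
`N(t) = (t log t / (π b)) (1 + O(log log t / log t))` as `t → ∞`. -/
theorem resonance_counting (b : ℝ) (hb : 0 < b) (k₀ : ℕ) (lam : ℕ → ℂ) (lam₀ : ℝ)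
    (r : ℕ → ℝ)
    (hre : ∀ k ≥ k₀, (lam k).re = Real.pi * b * k / Real.log k * (1 + r k))
    (hr : r =O[atTop] fun k => Real.log (Real.log k) / Real.log k)
    (him : ∃ C : ℝ, ∀ k ≥ k₀, |(lam k).im| ≤ C) :
    ∃ E : ℝ → ℝ,
      (∀ᶠ t in atTop,
        ((Set.ncard {k : ℕ | k₀ ≤ k ∧ lam₀ ≤ (lam k).re ∧ (lam k).re ≤ t} : ℝ))
          = t * Real.log t / (Real.pi * b) * (1 + E t)) ∧
      E =O[atTop] fun t => Real.log (Real.log t) / Real.log t :=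
  resonance_counting_general b hb k₀ lam lam₀ r hre hr
end

section
/- For b > 0, m > 0, the phase-space volume satisfies (1/(2π)) · Vol{(r, ρ) ∈ [0,∞) × ℝ : ρ² + m² e^{2br} ≤ λ²} = λ log λ / (π b) + O(λ) as λ → ∞. -/
open Filter Asymptotics MeasureTheory

/-!
Over the turning point `R = log (λ / m) / b`, where `m e^{bR} = λ`, the region lies above
`[0, R]`, and its slice at `r` is the interval `|ρ| ≤ √(λ² - m² e^{2br})`, whose half-width lies
between `λ - m e^{br}` and `λ`. Integrating these two bounds gives
`2λR - 2(λ - m)/b ≤ Vol ≤ 2λR`, and `2λR / 2π = λ log λ / (π b) - λ log m / (π b)`.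
-/

open Set Real

def phaseSpace (g : ℝ → ℝ) (lam : ℝ) : Set (ℝ × ℝ) :=
  {p | 0 ≤ p.1 ∧ p.2 ^ 2 + g p.1 ^ 2 ≤ lam ^ 2}

section phaseSpace

variable {g : ℝ → ℝ} {lam : ℝ}

theorem phaseSpace_subset_prod (hlam : 0 ≤ lam) :
    phaseSpace g lam ⊆ {r | 0 ≤ r ∧ g r ≤ lam} ×ˢ Icc (-lam) lam := by
  rintro ⟨r, ρ⟩ ⟨hr, hle⟩
  exact ⟨⟨hr, (abs_le_of_sq_le_sq' (by nlinarith [sq_nonneg ρ]) hlam).2⟩,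
    abs_le_of_sq_le_sq' (by nlinarith [sq_nonneg (g r)]) hlam⟩

theorem regionBetween_subset_phaseSpace {s : Set ℝ} (hg : ∀ r ∈ s, 0 ≤ g r)
    (hs : s ⊆ {r | 0 ≤ r ∧ g r ≤ lam}) :
    regionBetween (fun r => g r - lam) (fun r => lam - g r) s ⊆ phaseSpace g lam := by
  rintro ⟨r, ρ⟩ ⟨hr, hρlo, hρhi⟩
  obtain ⟨hr0, hgr⟩ := hs hr
  have hρ : ρ ^ 2 ≤ (lam - g r) ^ 2 := sq_le_sq' (by linarith) hρhi.le
  exact ⟨hr0, by nlinarith [hg r hr]⟩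

theorem volume_phaseSpace_le (hlam : 0 ≤ lam) :
    volume (phaseSpace g lam) ≤ volume {r | 0 ≤ r ∧ g r ≤ lam} * ENNReal.ofReal (2 * lam) :=
  calc volume (phaseSpace g lam)
      ≤ volume ({r | 0 ≤ r ∧ g r ≤ lam} ×ˢ Icc (-lam) lam) :=
        measure_mono (phaseSpace_subset_prod hlam)
    _ = volume {r | 0 ≤ r ∧ g r ≤ lam} * ENNReal.ofReal (2 * lam) := by
        rw [Measure.volume_eq_prod, Measure.prod_prod, Real.volume_Icc, sub_neg_eq_add, two_mul]

theorem ofReal_integral_le_volume_phaseSpace {s : Set ℝ} (hs : MeasurableSet s)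
    (hsub : s ⊆ {r | 0 ≤ r ∧ g r ≤ lam}) (hg : ∀ r ∈ s, 0 ≤ g r)
    (hint : IntegrableOn (fun r => lam - g r) s) :
    ENNReal.ofReal (∫ r in s, 2 * (lam - g r)) ≤ volume (phaseSpace g lam) := by
  have hint' : IntegrableOn (fun r => g r - lam) s := by
    simpa only [neg_sub] using hint.fun_neg
  calc ENNReal.ofReal (∫ r in s, 2 * (lam - g r))
      = volume (regionBetween (fun r => g r - lam) (fun r => lam - g r) s) := by
        rw [Measure.volume_eq_prod, volume_regionBetween_eq_integral hint' hint hs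
          (fun r hr => by linarith [(hsub hr).2])]
        congr 2 with r
        simp only [Pi.sub_apply]
        ring
    _ ≤ volume (phaseSpace g lam) := measure_mono (regionBetween_subset_phaseSpace hg hsub)

end phaseSpace

theorem integral_exp_mul {b : ℝ} (hb : b ≠ 0) (a c : ℝ) :
    ∫ r in a..c, exp (b * r) = (exp (b * c) - exp (b * a)) / b := by
  rw [intervalIntegral.integral_comp_mul_left exp hb, integral_exp, smul_eq_mul, inv_mul_eq_div]

noncomputable def turningPoint (b m lam : ℝ) : ℝ := log (lam / m) / b

section exponential

variable {b m lam : ℝ}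

theorem phaseSpace_mul_exp :
    phaseSpace (fun r => m * exp (b * r)) lam
      = {p : ℝ × ℝ | 0 ≤ p.1 ∧ p.2 ^ 2 + m ^ 2 * exp (2 * b * p.1) ≤ lam ^ 2} := by
  have hsq (r : ℝ) : (m * exp (b * r)) ^ 2 = m ^ 2 * exp (2 * b * r) := by
    rw [mul_pow, ← exp_nat_mul]
    ring_nf
  simp only [phaseSpace, hsq]

theorem turningPoint_nonneg (hb : 0 < b) (hm : 0 < m) (hlam : m ≤ lam) :
    0 ≤ turningPoint b m lam :=
  div_nonneg (log_nonneg ((one_le_div hm).2 hlam)) hb.le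

theorem exp_mul_turningPoint (hb : 0 < b) (hm : 0 < m) (hlam : 0 < lam) :
    exp (b * turningPoint b m lam) = lam / m := by
  rw [turningPoint, mul_div_cancel₀ _ hb.ne', exp_log (div_pos hlam hm)]

theorem setOf_mul_exp_le_eq_Icc (hb : 0 < b) (hm : 0 < m) (hlam : 0 < lam) :
    {r | 0 ≤ r ∧ m * exp (b * r) ≤ lam} = Icc 0 (turningPoint b m lam) := by
  ext r
  rw [mem_ofPred_eq, mem_Icc, turningPoint, le_div_iff₀ hb, le_log_iff_exp_le (div_pos hlam hm),
    le_div_iff₀' hm, mul_comm r]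

theorem integral_Icc_turningPoint_two_mul_sub_mul_exp (hb : 0 < b) (hm : 0 < m) (hlam : m ≤ lam) :
    ∫ r in Icc 0 (turningPoint b m lam), 2 * (lam - m * exp (b * r))
      = 2 * lam * turningPoint b m lam - 2 * (lam - m) / b := by
  rw [integral_Icc_eq_integral_Ioc, ← intervalIntegral.integral_of_le
      (turningPoint_nonneg hb hm hlam),
    intervalIntegral.integral_const_mul, intervalIntegral.integral_sub intervalIntegrable_const
      ((by fun_prop : Continuous fun r => m * exp (b * r)).intervalIntegrable _ _),
    intervalIntegral.integral_const_mul, integral_exp_mul hb.ne',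
    exp_mul_turningPoint hb hm (hm.trans_le hlam), intervalIntegral.integral_const, smul_eq_mul,
    mul_zero, exp_zero]
  field_simp
  ring

theorem abs_toReal_volume_phaseSpace_mul_exp_sub_le (hb : 0 < b) (hm : 0 < m) (hlam : m ≤ lam) :
    |(volume (phaseSpace (fun r => m * exp (b * r)) lam)).toReal
        - 2 * lam * turningPoint b m lam| ≤ 2 * lam / b := by
  have hlam0 : 0 < lam := hm.trans_le hlam
  have hslab := setOf_mul_exp_le_eq_Icc hb hm hlam0
  have hupper : volume (phaseSpace (fun r => m * exp (b * r)) lam)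
      ≤ ENNReal.ofReal (2 * lam * turningPoint b m lam) := by
    have := volume_phaseSpace_le (g := fun r => m * exp (b * r)) hlam0.le
    rwa [hslab, Real.volume_Icc, sub_zero,
      ← ENNReal.ofReal_mul (turningPoint_nonneg hb hm hlam), mul_comm] at this
  have hlower : 2 * lam * turningPoint b m lam - 2 * (lam - m) / b
      ≤ (volume (phaseSpace (fun r => m * exp (b * r)) lam)).toReal := by
    rw [← integral_Icc_turningPoint_two_mul_sub_mul_exp hb hm hlam,
      ← ENNReal.ofReal_le_iff_le_toReal (ne_top_of_le_ne_top ENNReal.ofReal_ne_top hupper)]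
    exact ofReal_integral_le_volume_phaseSpace measurableSet_Icc hslab.ge
      (fun r _ => by positivity)
      (by fun_prop : Continuous fun r => lam - m * exp (b * r)).integrableOn_Icc
  have hupper' := ENNReal.toReal_le_of_le_ofReal
    (mul_nonneg (by positivity) (turningPoint_nonneg hb hm hlam)) hupper
  have hgap : 2 * (lam - m) / b ≤ 2 * lam / b := by gcongr; linarith
  rw [abs_le]
  constructor <;> linarith [div_nonneg (mul_nonneg zero_le_two hlam0.le) hb.le]

end exponential

/-- The phase-space volume for `-∂_r² + m² e^{2br}` on `(0,∞)` satisfies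
`(1/2π) Vol{(r,ρ) : r ≥ 0, ρ² + m² e^{2br} ≤ λ²} = λ log λ/(π b) + O(λ)`. -/
theorem weyl_phase_space_volume (b m : ℝ) (hb : 0 < b) (hm : 0 < m) :
    (fun lam : ℝ =>
      (1 / (2 * Real.pi)) *
        (volume {p : ℝ × ℝ | 0 ≤ p.1 ∧ p.2 ^ 2 + m ^ 2 * Real.exp (2 * b * p.1) ≤ lam ^ 2}).toReal
      - lam * Real.log lam / (Real.pi * b))
      =O[atTop] (fun lam => lam) := by
  simp only [← phaseSpace_mul_exp]
  set V := fun lam => (volume (phaseSpace (fun r => m * exp (b * r)) lam)).toReal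
  have hsplit : ∀ᶠ lam in atTop,
      (V lam - 2 * lam * turningPoint b m lam) / (2 * π) - log m / (π * b) * lam
        = 1 / (2 * π) * V lam - lam * log lam / (π * b) := by
    filter_upwards [eventually_gt_atTop 0] with lam hlam
    rw [turningPoint, log_div hlam.ne' hm.ne']
    field_simp
    ring
  have hremainder : (fun lam => (V lam - 2 * lam * turningPoint b m lam) / (2 * π))
      =O[atTop] fun lam => lam := by
    refine .of_bound (1 / (π * b)) ?_
    filter_upwards [eventually_ge_atTop m] with lam hlam
    rw [norm_div, Real.norm_of_nonneg (by positivity : 0 ≤ 2 * π), Real.norm_eq_abs,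
      Real.norm_of_nonneg (hm.le.trans hlam), div_le_iff₀ (by positivity)]
    calc _ ≤ 2 * lam / b := abs_toReal_volume_phaseSpace_mul_exp_sub_le hb hm hlam
      _ = 1 / (π * b) * lam * (2 * π) := by field_simp
  exact (hremainder.sub (isBigO_const_mul_self _ _ _)).congr' hsplit EventuallyEq.rfl
end
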